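/- arXiv:2603.18845 — 5 statements merged into one kernel-verified Lean document; each statement's English description precedes it below -/
import Mathlib

section
/- Fix draws x⁽¹⁾, …, x⁽ⁿ⁾ ∈ ℝᵈ and scores α⁽¹⁾, …, α⁽ⁿ⁾ ∈ ℝᵈ, and assume that for every coordinate j ∈ {1,…,d} the sample variances Var(xⱼ) = (1/n)Σᵢ(xⱼ⁽ⁱ⁾ - x̄ⱼ)² and Var(αⱼ) = (1/n)Σᵢ(αⱼ⁽ⁱ⁾ - ᾱⱼ)² are strictly positive. Define for μ ∈ ℝᵈ and σ ∈ (0,∞)ᵈ the empirical Fisher divergence D̂(μ, σ) = (1/n)Σᵢ ‖σ ⊙ α⁽ⁱ⁾ + σ⁻¹ ⊙ (x⁽ⁱ⁾ - μ)‖², where ⊙ is the elementwise product and σ⁻¹ the elementwise reciprocal. Then D̂ attains its global minimum over ℝᵈ × (0,∞)ᵈ exactly at the point given coordinatewise by (σⱼ*)² = √(Var(xⱼ)/Var(αⱼ)) and μ* = x̄ + (σ*)² ⊙ ᾱ, where x̄ and ᾱ are the sample means of the x⁽ⁱ⁾ and α⁽ⁱ⁾. -/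
lemma coord_decomp (n : ℕ) (hn : (n:ℝ) ≠ 0) (a x : Fin n → ℝ) (ab xb va vx : ℝ)
    (hab : ab = (1/(n:ℝ)) * ∑ i, a i) (hxb : xb = (1/(n:ℝ)) * ∑ i, x i)
    (hva : va = (1/(n:ℝ)) * ∑ i, (a i - ab)^2) (hvx : vx = (1/(n:ℝ)) * ∑ i, (x i - xb)^2)
    (hva0 : 0 ≤ va) (hvx0 : 0 ≤ vx)
    (μ σ : ℝ) (hσ : 0 < σ) :
    (1/(n:ℝ)) * ∑ i, (σ * a i + σ⁻¹ * (x i - μ))^2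
    = (σ * Real.sqrt va - σ⁻¹ * Real.sqrt vx)^2 + (σ*ab + σ⁻¹*(xb - μ))^2
      + (2 * Real.sqrt va * Real.sqrt vx + 2*((1/(n:ℝ))*∑ i, (a i - ab)*(x i - xb))) := by
  have hσ' : σ ≠ 0 := ne_of_gt hσ
  have h1 : ∑ i, a i = n * ab := by rw [hab]; field_simp
  have h2 : ∑ i, x i = n * xb := by rw [hxb]; field_simp
  have hza : ∑ i : Fin n, (a i - ab) = 0 := by
    rw [Finset.sum_sub_distrib, h1]; simp
  have hzx : ∑ i : Fin n, (x i - xb) = 0 := by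
    rw [Finset.sum_sub_distrib, h2]; simp
  have expand : ∀ i : Fin n, (σ * a i + σ⁻¹ * (x i - μ))^2
      = σ^2*(a i - ab)^2 + σ⁻¹^2*(x i - xb)^2 + 2*((a i - ab)*(x i - xb))
        + (σ*ab + σ⁻¹*(xb - μ))^2
        + (2*σ^2*ab + 2*(xb - μ)) * (a i - ab)
        + (2*ab + 2*σ⁻¹^2*(xb-μ)) * (x i - xb) := by
    intro i; field_simp; ring
  have hsum : ∑ i, (σ * a i + σ⁻¹ * (x i - μ))^2
      = σ^2 * ∑ i, (a i - ab)^2 + σ⁻¹^2 * ∑ i, (x i - xb)^2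
        + 2 * ∑ i, (a i - ab)*(x i - xb) + n * (σ*ab + σ⁻¹*(xb - μ))^2 := by
    calc ∑ i, (σ * a i + σ⁻¹ * (x i - μ))^2
        = ∑ i, (σ^2*(a i - ab)^2 + σ⁻¹^2*(x i - xb)^2 + 2*((a i - ab)*(x i - xb))
            + (σ*ab + σ⁻¹*(xb - μ))^2
            + (2*σ^2*ab + 2*(xb - μ)) * (a i - ab)
            + (2*ab + 2*σ⁻¹^2*(xb-μ)) * (x i - xb)) := by
          exact Finset.sum_congr rfl fun i _ => expand i
      _ = σ^2 * ∑ i, (a i - ab)^2 + σ⁻¹^2 * ∑ i, (x i - xb)^2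
            + 2 * ∑ i, (a i - ab)*(x i - xb) + n * (σ*ab + σ⁻¹*(xb - μ))^2
            + (2*σ^2*ab + 2*(xb - μ)) * ∑ i, (a i - ab)
            + (2*ab + 2*σ⁻¹^2*(xb-μ)) * ∑ i, (x i - xb) := by
          simp only [Finset.sum_add_distrib, ← Finset.mul_sum, Finset.sum_const,
            Finset.card_univ, Fintype.card_fin, nsmul_eq_mul]
      _ = _ := by rw [hza, hzx]; ring
  have hsq : (σ * Real.sqrt va - σ⁻¹ * Real.sqrt vx)^2
      = σ^2 * va + σ⁻¹^2 * vx - 2 * Real.sqrt va * Real.sqrt vx := by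
    have h3 : Real.sqrt va ^ 2 = va := Real.sq_sqrt hva0
    have h4 : Real.sqrt vx ^ 2 = vx := Real.sq_sqrt hvx0
    rw [show (σ * Real.sqrt va - σ⁻¹ * Real.sqrt vx)^2
        = σ^2*(Real.sqrt va)^2 + σ⁻¹^2*(Real.sqrt vx)^2
          - 2*(σ*σ⁻¹)*(Real.sqrt va * Real.sqrt vx) from by ring,
      mul_inv_cancel₀ hσ', h3, h4]; ring
  rw [hsum, hsq, hva, hvx]
  field_simp
  ring

/-- With coordinatewise positive sample variances of draws and scores,
the empirical Fisher divergence `D̂(μ, σ) = (1/n)Σᵢ ‖σ ⊙ α⁽ⁱ⁾ + σ⁻¹ ⊙ (x⁽ⁱ⁾ - μ)‖²`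
attains its global minimum over `ℝᵈ × (0,∞)ᵈ` exactly at `(σⱼ*)² = √(Var(xⱼ)/Var(αⱼ))`,
`μ* = x̄ + (σ*)² ⊙ ᾱ`. -/
theorem fisher_hmc_diagonal_minimizer
    (d n : ℕ) (hn : 0 < n)
    (x α : Fin n → Fin d → ℝ)
    (xbar αbar varx varα : Fin d → ℝ)
    (hxbar : ∀ j, xbar j = (1 / (n : ℝ)) * ∑ i, x i j)
    (hαbar : ∀ j, αbar j = (1 / (n : ℝ)) * ∑ i, α i j)
    (hvarx : ∀ j, varx j = (1 / (n : ℝ)) * ∑ i, (x i j - xbar j) ^ 2)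
    (hvarα : ∀ j, varα j = (1 / (n : ℝ)) * ∑ i, (α i j - αbar j) ^ 2)
    (hvx : ∀ j, 0 < varx j) (hvα : ∀ j, 0 < varα j)
    (D : (Fin d → ℝ) → (Fin d → ℝ) → ℝ)
    (hD : ∀ μ σ, D μ σ =
      (1 / (n : ℝ)) * ∑ i, ∑ j, (σ j * α i j + (σ j)⁻¹ * (x i j - μ j)) ^ 2)
    (σstar μstar : Fin d → ℝ)
    (hσpos : ∀ j, 0 < σstar j)
    (hσstar : ∀ j, (σstar j) ^ 2 = Real.sqrt (varx j / varα j))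
    (hμstar : ∀ j, μstar j = xbar j + (σstar j) ^ 2 * αbar j) :
    (∀ (μ σ : Fin d → ℝ), (∀ j, 0 < σ j) → D μstar σstar ≤ D μ σ) ∧
    (∀ (μ σ : Fin d → ℝ), (∀ j, 0 < σ j) → D μ σ = D μstar σstar →
      μ = μstar ∧ σ = σstar) := by
  have hn' : (n : ℝ) ≠ 0 := Nat.cast_ne_zero.mpr hn.ne'
  set E : (Fin d → ℝ) → (Fin d → ℝ) → ℝ := fun μ σ =>
    ∑ j, ((σ j * Real.sqrt (varα j) - (σ j)⁻¹ * Real.sqrt (varx j))^2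
      + (σ j * αbar j + (σ j)⁻¹ * (xbar j - μ j))^2) with hE
  set C : ℝ := ∑ j, (2 * Real.sqrt (varα j) * Real.sqrt (varx j)
      + 2*((1/(n:ℝ))*∑ i, (α i j - αbar j)*(x i j - xbar j))) with hC
  have key : ∀ (μ σ : Fin d → ℝ), (∀ j, 0 < σ j) → D μ σ = E μ σ + C := by
    intro μ σ hσ
    rw [hD, Finset.sum_comm, Finset.mul_sum, hE, hC, ← Finset.sum_add_distrib]
    refine Finset.sum_congr rfl fun j _ => ?_
    have := coord_decomp n hn' (fun i => α i j) (fun i => x i j)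
      (αbar j) (xbar j) (varα j) (varx j) (hαbar j) (hxbar j) (hvarα j) (hvarx j)
      (hvα j).le (hvx j).le (μ j) (σ j) (hσ j)
    rw [this]
  -- σstar facts
  have hσsq : ∀ j, (σstar j)^2 * Real.sqrt (varα j) = Real.sqrt (varx j) := by
    intro j
    have hα : Real.sqrt (varα j) ≠ 0 := (Real.sqrt_pos.mpr (hvα j)).ne'
    rw [hσstar j, Real.sqrt_div (hvx j).le, div_mul_cancel₀ _ hα]
  have hz1 : ∀ j, σstar j * Real.sqrt (varα j) - (σstar j)⁻¹ * Real.sqrt (varx j) = 0 := by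
    intro j
    have hs := (hσpos j).ne'
    have := hσsq j
    field_simp
    nlinarith [this]
  have hz2 : ∀ j, σstar j * αbar j + (σstar j)⁻¹ * (xbar j - μstar j) = 0 := by
    intro j
    have hs := (hσpos j).ne'
    rw [hμstar j]
    field_simp
    ring
  have hEstar : E μstar σstar = 0 := by
    rw [hE]
    refine Finset.sum_eq_zero fun j _ => ?_
    rw [hz1 j, hz2 j]; norm_num
  have hEnn : ∀ (μ σ : Fin d → ℝ), 0 ≤ E μ σ := by
    intro μ σ
    exact Finset.sum_nonneg fun j _ => add_nonneg (sq_nonneg _) (sq_nonneg _)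
  constructor
  · intro μ σ hσ
    rw [key μ σ hσ, key μstar σstar hσpos, hEstar]
    linarith [hEnn μ σ]
  · intro μ σ hσ heq
    rw [key μ σ hσ, key μstar σstar hσpos, hEstar, zero_add] at heq
    have hE0 : E μ σ = 0 := by linarith
    have hall : ∀ j ∈ Finset.univ,
        ((σ j * Real.sqrt (varα j) - (σ j)⁻¹ * Real.sqrt (varx j))^2
          + (σ j * αbar j + (σ j)⁻¹ * (xbar j - μ j))^2) = 0 := by
      rw [← Finset.sum_eq_zero_iff_of_nonneg
        (fun j _ => add_nonneg (sq_nonneg _) (sq_nonneg _))]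
      exact hE0
    have hterm : ∀ j, σ j * Real.sqrt (varα j) - (σ j)⁻¹ * Real.sqrt (varx j) = 0 ∧
        σ j * αbar j + (σ j)⁻¹ * (xbar j - μ j) = 0 := by
      intro j
      have h := hall j (Finset.mem_univ j)
      constructor
      · nlinarith [sq_nonneg (σ j * Real.sqrt (varα j) - (σ j)⁻¹ * Real.sqrt (varx j)),
          sq_nonneg (σ j * αbar j + (σ j)⁻¹ * (xbar j - μ j))]
      · nlinarith [sq_nonneg (σ j * Real.sqrt (varα j) - (σ j)⁻¹ * Real.sqrt (varx j)),
          sq_nonneg (σ j * αbar j + (σ j)⁻¹ * (xbar j - μ j))]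
    have hσeq : ∀ j, σ j = σstar j := by
      intro j
      have h1 := (hterm j).1
      have hs := (hσ j).ne'
      have h2 : (σ j)^2 * Real.sqrt (varα j) = Real.sqrt (varx j) := by
        have : σ j * (σ j * Real.sqrt (varα j) - (σ j)⁻¹ * Real.sqrt (varx j)) = 0 := by
          rw [h1]; ring
        field_simp at this
        nlinarith [this]
      have hsqeq : (σ j)^2 = (σstar j)^2 := by
        have hαpos : 0 < Real.sqrt (varα j) := Real.sqrt_pos.mpr (hvα j)
        have h3 := hσsq j
        have := h2.trans h3.symm
        exact mul_right_cancel₀ hαpos.ne' this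
      nlinarith [hσ j, hσpos j, hsqeq]
    have hμeq : ∀ j, μ j = μstar j := by
      intro j
      have h2 := (hterm j).2
      have hs := (hσ j).ne'
      have : (σ j)^2 * αbar j + (xbar j - μ j) = 0 := by
        have : σ j * (σ j * αbar j + (σ j)⁻¹ * (xbar j - μ j)) = 0 := by rw [h2]; ring
        field_simp at this
        nlinarith [this]
      rw [hμstar j, ← hσeq j]
      linarith
    exact ⟨funext hμeq, funext hσeq⟩
end

section
/- Let x⁽¹⁾, …, x⁽ⁿ⁾ ∈ ℝᵈ be draws with scores α⁽¹⁾, …, α⁽ⁿ⁾ ∈ ℝᵈ, and let D̂(A, μ) = (1/n)Σᵢ ‖Aᵀα⁽ⁱ⁾ + A⁻¹(x⁽ⁱ⁾ - μ)‖² be the empirical Fisher divergence, defined for invertible A ∈ ℝ^{d×d} and μ ∈ ℝᵈ. If (A, μ) is a critical point of D̂ (equivalently, a global minimizer at which the derivative vanishes), then, writing M = (AAᵀ)⁻¹, C_x = (1/n)Σᵢ(x⁽ⁱ⁾ - x̄)(x⁽ⁱ⁾ - x̄)ᵀ and C_α = (1/n)Σᵢ(α⁽ⁱ⁾ - ᾱ)(α⁽ⁱ⁾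 - ᾱ)ᵀ, it holds that M C_x M = C_α and μ = x̄ + M⁻¹ᾱ, where x̄ and ᾱ are the sample means of draws and scores. -/
/-!
Perturb `A` to `A (1 + tG)` and `μ` to `μ + t A w`. In the whitened coordinates
`βᵢ = Aᵀ αᵢ`, `zᵢ = A⁻¹ (xᵢ - μ)` the residual becomes `(1 + tG)ᵀ βᵢ + (1 + tG)⁻¹ (zᵢ - t w)`, whose
derivative at `t = 0` is `Gᵀ βᵢ - G zᵢ - w`. Stationarity in `w` says `∑ (βᵢ + zᵢ) = 0`, so the
whitened means are opposite; stationarity in `G = E_kl` says `∑ βᵢ βᵢᵀ = ∑ zᵢ zᵢᵀ`. Removing the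
(equal) outer products of the means leaves `Aᵀ C_α A = A⁻¹ C_x A⁻ᵀ`, i.e. `M C_x M = C_α`, and the
mean relation `Aᵀ ᾱ + A⁻¹ (x̄ - μ) = 0` is `μ = x̄ + A Aᵀ ᾱ`.
-/

open Matrix

section Calculus

-- The operator norm induces the product topology, so the statements below do not depend on it.
attribute [local instance] Matrix.linftyOpNormedAddCommGroup Matrix.linftyOpNormedSpace
  Matrix.linftyOpNormedRing Matrix.linftyOpNormedAlgebra

theorem hasDerivAt_inv_one_add_smul {n : Type*} [Fintype n] [DecidableEq n]
    (G : Matrix n n ℝ) : HasDerivAt (fun t : ℝ => (1 + t • G)⁻¹) (-G) 0 := by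
  have hline : HasDerivAt (fun t : ℝ => 1 + t • G) G 0 := by
    have := ((hasDerivAt_id' (0 : ℝ)).smul_const G).const_add (1 : Matrix n n ℝ)
    rwa [one_smul] at this
  have hinv : HasFDerivAt (𝕜 := ℝ) Ring.inverse (-ContinuousLinearMap.mulLeftRight ℝ _ 1 1)
      (1 + (0 : ℝ) • G) := by
    simpa using hasFDerivAt_ringInverse (𝕜 := ℝ) (1 : (Matrix n n ℝ)ˣ)
  have := hinv.comp_hasDerivAt (0 : ℝ) hline
  simp only [Function.comp_def, ← nonsing_inv_eq_ringInverse] at this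
  exact this.congr_deriv (by simp)

theorem hasDerivAt_mulVec {m n : Type*} [Fintype m] [Fintype n] {M : ℝ → Matrix m n ℝ}
    {v : ℝ → n → ℝ} {M' : Matrix m n ℝ} {v' : n → ℝ} {t : ℝ}
    (hM : HasDerivAt M M' t) (hv : HasDerivAt v v' t) :
    HasDerivAt (fun s => M s *ᵥ v s) (M t *ᵥ v' + M' *ᵥ v t) t :=
  let B := (mulVecBilin ℝ ℝ : Matrix m n ℝ →ₗ[ℝ] (n → ℝ) →ₗ[ℝ] m → ℝ).mkContinuous₂ 1
    fun A w => by simpa using linfty_opNorm_mulVec A w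
  B.hasDerivAt_of_bilinear (fun _ => hM) (fun _ => hv)

end Calculus

theorem hasDerivAt_dotProduct_self {n : Type*} [Fintype n] {r : ℝ → n → ℝ} {r' : n → ℝ} {t : ℝ}
    (h : HasDerivAt r r' t) : HasDerivAt (fun s => r s ⬝ᵥ r s) (2 * (r t ⬝ᵥ r')) t := by
  have hj : ∀ j, HasDerivAt (fun s => r s j) (r' j) t := hasDerivAt_pi.1 h
  refine (HasDerivAt.fun_sum (u := Finset.univ) fun j _ => (hj j).mul (hj j)).congr_deriv ?_
  simp only [dotProduct, Finset.mul_sum]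
  exact Finset.sum_congr rfl fun j _ => by ring

section Stationarity

variable {ι n : Type*} [Fintype ι] [Fintype n]

theorem sum_add_eq_zero_of_forall_dotProduct {β z : ι → n → ℝ}
    (h : ∀ (G : Matrix n n ℝ) (w : n → ℝ), ∑ i, (β i + z i) ⬝ᵥ (Gᵀ *ᵥ β i - G *ᵥ z i - w) = 0) :
    ∑ i, (β i + z i) = 0 := by
  refine dotProduct_eq_zero _ fun w => ?_
  have hw := h 0 w
  simp only [transpose_zero, zero_mulVec, sub_self, zero_sub, dotProduct_neg,
    Finset.sum_neg_distrib, neg_eq_zero] at hw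
  rwa [sum_dotProduct]

theorem sum_vecMulVec_eq_of_forall_dotProduct [DecidableEq n] {β z : ι → n → ℝ}
    (h : ∀ (G : Matrix n n ℝ) (w : n → ℝ), ∑ i, (β i + z i) ⬝ᵥ (Gᵀ *ᵥ β i - G *ᵥ z i - w) = 0) :
    ∑ i, vecMulVec (β i) (β i) = ∑ i, vecMulVec (z i) (z i) := by
  ext k l
  have hkl := h (single k l 1) 0
  simp only [transpose_single, single_mulVec, one_mul, sub_zero, dotProduct_sub] at hkl
  change ∑ i, ((β i + z i) ⬝ᵥ Pi.single l (β i k) - (β i + z i) ⬝ᵥ Pi.single k (z i l)) = 0 at hkl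
  simp only [dotProduct_single] at hkl
  simp only [Matrix.sum_apply, vecMulVec_apply]
  rw [← sub_eq_zero, ← Finset.sum_sub_distrib, ← hkl]
  exact Finset.sum_congr rfl fun i _ => by simp only [Pi.add_apply]; ring

end Stationarity

section Statistics

variable {ι n : Type*} [Fintype ι]

noncomputable def sampleMean (u : ι → n → ℝ) : n → ℝ := (1 / (Fintype.card ι : ℝ)) • ∑ i, u i

noncomputable def sampleCov (u : ι → n → ℝ) : Matrix n n ℝ :=
  (1 / (Fintype.card ι : ℝ)) • ∑ i, vecMulVec (u i - sampleMean u) (u i - sampleMean u)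

theorem sampleMean_mulVec {m : Type*} [Fintype n] (P : Matrix m n ℝ) (u : ι → n → ℝ) :
    sampleMean (fun i => P *ᵥ u i) = P *ᵥ sampleMean u := by
  rw [sampleMean, sampleMean, mulVec_smul, mulVec_sum]

theorem sampleMean_sub_const [Nonempty ι] (u : ι → n → ℝ) (c : n → ℝ) :
    sampleMean (fun i => u i - c) = sampleMean u - c := by
  have hcard : (Fintype.card ι : ℝ) ≠ 0 := by positivity
  simp only [sampleMean, Finset.sum_sub_distrib, Finset.sum_const, Finset.card_univ, smul_sub]
  rw [← Nat.cast_smul_eq_nsmul ℝ, smul_smul, one_div_mul_cancel hcard, one_smul]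

theorem sampleMean_add_sampleMean_eq_zero {β z : ι → n → ℝ} (h : ∑ i, (β i + z i) = 0) :
    sampleMean β + sampleMean z = 0 := by
  rw [sampleMean, sampleMean, ← smul_add, ← Finset.sum_add_distrib, h, smul_zero]

theorem sampleCov_mulVec {m : Type*} [Fintype n] (P : Matrix m n ℝ) (u : ι → n → ℝ) :
    sampleCov (fun i => P *ᵥ u i) = P * sampleCov u * Pᵀ := by
  have hconj : ∀ a : n → ℝ, vecMulVec (P *ᵥ a) (P *ᵥ a) = P * vecMulVec a a * Pᵀ := fun a => by
    rw [mul_vecMulVec, vecMulVec_mul, vecMul_transpose]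
  simp only [sampleCov, sampleMean_mulVec, ← mulVec_sub, hconj, Matrix.mul_smul, Matrix.smul_mul,
    Matrix.mul_sum, Matrix.sum_mul]

theorem sampleCov_sub_const [Nonempty ι] (u : ι → n → ℝ) (c : n → ℝ) :
    sampleCov (fun i => u i - c) = sampleCov u := by
  simp only [sampleCov, sampleMean_sub_const, sub_sub_sub_cancel_right]

theorem sampleCov_def' [Nonempty ι] (u : ι → n → ℝ) :
    sampleCov u = (1 / (Fintype.card ι : ℝ)) • ∑ i, vecMulVec (u i) (u i)
      - vecMulVec (sampleMean u) (sampleMean u) := by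
  have hcard : (Fintype.card ι : ℝ) ≠ 0 := by positivity
  ext k l
  simp only [sampleCov, sampleMean, Matrix.smul_apply, Matrix.sub_apply, Matrix.sum_apply,
    vecMulVec_apply, Pi.sub_apply, Pi.smul_apply, Finset.sum_apply, smul_eq_mul, sub_mul, mul_sub,
    Finset.sum_sub_distrib, ← Finset.sum_mul, ← Finset.mul_sum, Finset.sum_const, Finset.card_univ,
    nsmul_eq_mul]
  field_simp
  ring

theorem sampleCov_eq_of_sum_add_eq_zero [Nonempty ι] {β z : ι → n → ℝ}
    (hsum : ∑ i, (β i + z i) = 0)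
    (hscatter : ∑ i, vecMulVec (β i) (β i) = ∑ i, vecMulVec (z i) (z i)) :
    sampleCov β = sampleCov z := by
  rw [sampleCov_def', sampleCov_def', hscatter,
    eq_neg_of_add_eq_zero_right (sampleMean_add_sampleMean_eq_zero hsum), neg_vecMulVec,
    vecMulVec_neg, neg_neg]

end Statistics

section LinearAlgebra

variable {n R : Type*} [Fintype n] [DecidableEq n] [CommRing R]

theorem eq_add_mul_transpose_mulVec_of_transpose_mulVec_add_eq_zero {A : Matrix n n R}
    (hA : IsUnit A.det) {a x μ : n → R} (h : Aᵀ *ᵥ a + A⁻¹ *ᵥ (x - μ) = 0) :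
    μ = x + (A * Aᵀ) *ᵥ a := by
  have hA' := congrArg (A *ᵥ ·) h
  simp only [mulVec_add, mulVec_mulVec, mul_nonsing_inv A hA, one_mulVec, mulVec_zero] at hA'
  rw [← sub_eq_zero, ← neg_eq_zero, ← hA']
  abel

theorem inv_mul_transpose_conj_eq {A X Y : Matrix n n R} (hA : IsUnit A.det)
    (h : Aᵀ * X * A = A⁻¹ * Y * A⁻¹ᵀ) : (A * Aᵀ)⁻¹ * Y * (A * Aᵀ)⁻¹ = X := by
  calc (A * Aᵀ)⁻¹ * Y * (A * Aᵀ)⁻¹ = A⁻¹ᵀ * (A⁻¹ * Y * A⁻¹ᵀ) * A⁻¹ := by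
        simp only [Matrix.mul_inv_rev, transpose_nonsing_inv, Matrix.mul_assoc]
    _ = (A * A⁻¹)ᵀ * X * (A * A⁻¹) := by
        rw [← h, transpose_mul]; simp only [Matrix.mul_assoc]
    _ = X := by rw [mul_nonsing_inv A hA, transpose_one, Matrix.one_mul, Matrix.mul_one]

end LinearAlgebra

section Fisher

variable {ι n : Type*} [Fintype ι] [Fintype n] [DecidableEq n]

theorem hasDerivAt_one_add_smul_residual (G : Matrix n n ℝ) (β z w : n → ℝ) :
    HasDerivAt (fun t : ℝ => (1 + t • G)ᵀ *ᵥ β + (1 + t • G)⁻¹ *ᵥ (z - t • w))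
      (Gᵀ *ᵥ β - G *ᵥ z - w) 0 := by
  have hlin : HasDerivAt (fun t : ℝ => (1 + t • G)ᵀ *ᵥ β) (Gᵀ *ᵥ β) 0 := by
    simp only [transpose_add, transpose_one, transpose_smul, add_mulVec, one_mulVec, smul_mulVec]
    simpa using ((hasDerivAt_id' (0 : ℝ)).smul_const (Gᵀ *ᵥ β)).const_add β
  have hshift : HasDerivAt (fun t : ℝ => z - t • w) (-w) 0 := by
    simpa using ((hasDerivAt_id' (0 : ℝ)).smul_const w).const_sub z
  refine (hlin.add (hasDerivAt_mulVec (hasDerivAt_inv_one_add_smul G) hshift)).congr_deriv ?_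
  simp only [zero_smul, add_zero, inv_one, one_mulVec, sub_zero, neg_mulVec]
  abel

noncomputable def fisherResidual (B : Matrix n n ℝ) (μ x a : n → ℝ) : n → ℝ :=
  Bᵀ *ᵥ a + B⁻¹ *ᵥ (x - μ)

theorem fisherResidual_mul_one_add_smul {A : Matrix n n ℝ} (hA : IsUnit A.det)
    (G : Matrix n n ℝ) (μ w x a : n → ℝ) (t : ℝ) :
    fisherResidual (A * (1 + t • G)) (μ + t • (A *ᵥ w)) x a
      = (1 + t • G)ᵀ *ᵥ (Aᵀ *ᵥ a) + (1 + t • G)⁻¹ *ᵥ (A⁻¹ *ᵥ (x - μ) - t • w) := by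
  rw [fisherResidual, transpose_mul, Matrix.mul_inv_rev, ← mulVec_mulVec, ← mulVec_mulVec,
    sub_add_eq_sub_sub, mulVec_sub A⁻¹ (x - μ), mulVec_smul, mulVec_mulVec w A⁻¹ A,
    nonsing_inv_mul A hA, one_mulVec]

theorem sum_fisherResidual_dotProduct_eq_zero {c : ℝ} (hc : c ≠ 0) (x α : ι → n → ℝ)
    {A : Matrix n n ℝ} (hA : IsUnit A.det) (μ : n → ℝ)
    (hcrit : ∀ (H : Matrix n n ℝ) (v : n → ℝ), HasDerivAt (fun t : ℝ => c * ∑ i,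
      fisherResidual (A + t • H) (μ + t • v) (x i) (α i) ⬝ᵥ
        fisherResidual (A + t • H) (μ + t • v) (x i) (α i)) 0 0)
    (G : Matrix n n ℝ) (w : n → ℝ) :
    ∑ i, fisherResidual A μ (x i) (α i) ⬝ᵥ
      (Gᵀ *ᵥ (Aᵀ *ᵥ α i) - G *ᵥ (A⁻¹ *ᵥ (x i - μ)) - w) = 0 := by
  have hline : ∀ t : ℝ, A + t • (A * G) = A * (1 + t • G) := fun t => by
    rw [Matrix.mul_add, Matrix.mul_one, Matrix.mul_smul]
  have hderiv := (HasDerivAt.fun_sum (u := Finset.univ) fun i _ => hasDerivAt_dotProduct_self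
    (hasDerivAt_one_add_smul_residual G (Aᵀ *ᵥ α i) (A⁻¹ *ᵥ (x i - μ)) w)).const_mul c
  simp only [← fisherResidual_mul_one_add_smul hA, ← hline] at hderiv
  have h0 := (hcrit (A * G) (A *ᵥ w)).unique hderiv
  simp only [zero_smul, add_zero, ← Finset.mul_sum] at h0
  exact (mul_eq_zero.1 ((mul_eq_zero.1 h0.symm).resolve_left hc)).resolve_left two_ne_zero

end Fisher

/-- If `(A, μ)` (with `A` invertible) is a critical point of the
empirical Fisher divergence `D̂(A, μ) = (1/n)Σᵢ ‖Aᵀα⁽ⁱ⁾ + A⁻¹(x⁽ⁱ⁾ - μ)‖²`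
(all directional derivatives vanish), then, with `M = (AAᵀ)⁻¹`,
`M C_x M = C_α` and `μ = x̄ + M⁻¹ᾱ`, where `C_x, C_α` are the 1/n-normalized
sample covariances of draws and scores. -/
theorem fisher_hmc_dense_critical_point
    (d n : ℕ) (hn : 0 < n)
    (x α : Fin n → Fin d → ℝ)
    (xbar αbar : Fin d → ℝ)
    (hxbar : xbar = (1 / (n : ℝ)) • ∑ i, x i)
    (hαbar : αbar = (1 / (n : ℝ)) • ∑ i, α i)
    (Cx Cα : Matrix (Fin d) (Fin d) ℝ)
    (hCx : Cx = (1 / (n : ℝ)) • ∑ i, Matrix.vecMulVec (x i - xbar) (x i - xbar))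
    (hCα : Cα = (1 / (n : ℝ)) • ∑ i, Matrix.vecMulVec (α i - αbar) (α i - αbar))
    (Dhat : Matrix (Fin d) (Fin d) ℝ → (Fin d → ℝ) → ℝ)
    (hDhat : ∀ B μ, Dhat B μ =
      (1 / (n : ℝ)) * ∑ i, ∑ j, (Bᵀ.mulVec (α i) j + B⁻¹.mulVec (x i - μ) j) ^ 2)
    (A : Matrix (Fin d) (Fin d) ℝ) (hA : IsUnit A.det) (μ : Fin d → ℝ)
    (hcrit : ∀ (H : Matrix (Fin d) (Fin d) ℝ) (v : Fin d → ℝ),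
      HasDerivAt (fun t : ℝ => Dhat (A + t • H) (μ + t • v)) 0 0) :
    (A * Aᵀ)⁻¹ * Cx * (A * Aᵀ)⁻¹ = Cα ∧
    μ = xbar + ((A * Aᵀ)⁻¹)⁻¹.mulVec αbar := by
  have : Nonempty (Fin n) := Fin.pos_iff_nonempty.1 hn
  have hx : xbar = sampleMean x := by rw [hxbar, sampleMean, Fintype.card_fin]
  have hα : αbar = sampleMean α := by rw [hαbar, sampleMean, Fintype.card_fin]
  have hCx' : Cx = sampleCov x := by rw [hCx, sampleCov, ← hx, Fintype.card_fin]
  have hCα' : Cα = sampleCov α := by rw [hCα, sampleCov, ← hα, Fintype.card_fin]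
  have hstat := sum_fisherResidual_dotProduct_eq_zero (one_div_ne_zero (Nat.cast_ne_zero.2 hn.ne'))
    x α hA μ (by simpa only [hDhat, fisherResidual, dotProduct, Pi.add_apply, sq] using hcrit)
  have hsum := sum_add_eq_zero_of_forall_dotProduct hstat
  have hcov := sampleCov_eq_of_sum_add_eq_zero hsum (sum_vecMulVec_eq_of_forall_dotProduct hstat)
  have hmean := sampleMean_add_sampleMean_eq_zero hsum
  rw [sampleCov_mulVec, sampleCov_mulVec, sampleCov_sub_const, transpose_transpose, ← hCx',
    ← hCα'] at hcov
  rw [sampleMean_mulVec, sampleMean_mulVec, sampleMean_sub_const, ← hx, ← hα] at hmean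
  have hAAt : IsUnit (A * Aᵀ).det := by rw [det_mul, det_transpose]; exact hA.mul hA
  refine ⟨inv_mul_transpose_conj_eq hA hcov, ?_⟩
  rw [nonsing_inv_nonsing_inv _ hAAt]
  exact eq_add_mul_transpose_mulVec_of_transpose_mulVec_add_eq_zero hA hmean
end

section
/- Let N ∈ ℝ^{d×d} be symmetric positive definite and P ∈ ℝ^{d×d} symmetric positive semi-definite, and suppose N P N = P. Then N acts as the identity on the column space of P: for every vector v in the range of P, N v = v. -/
/-!
Write `A = N - 1`. Expanding `N P N = P` and cycling traces shows `tr ((N + 1) A P A) = 0`.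
Both `tr (N · A P A)` and `tr (A P A)` are nonnegative, since `N` and `A P A` are positive
semidefinite, so `tr (A P A) = 0` and hence `A P A = 0`. Writing `P = Cᴴ C`, this says
`(C A)ᴴ (C A) = 0`, so `C A = 0` and `A P = 0`, i.e. `N P = P`.
-/

open Matrix
open scoped MatrixOrder ComplexOrder

namespace Matrix

variable {n R 𝕜 : Type*} [Fintype n]

theorem PosSemidef.trace_mul_nonneg [RCLike 𝕜] {A B : Matrix n n 𝕜} (hA : A.PosSemidef)
    (hB : B.PosSemidef) : 0 ≤ (A * B).trace := by
  classical
  obtain ⟨C, rfl⟩ := CStarAlgebra.nonneg_iff_eq_star_mul_self.mp hB.nonneg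
  rw [star_eq_conjTranspose, ← Matrix.mul_assoc, trace_mul_comm, ← Matrix.mul_assoc]
  exact (hA.mul_mul_conjTranspose_same C).trace_nonneg

theorem PosSemidef.conjTranspose_mul_eq_zero [RCLike 𝕜] {P : Matrix n n 𝕜} (hP : P.PosSemidef)
    {B : Matrix n n 𝕜} (h : Bᴴ * P * B = 0) : Bᴴ * P = 0 := by
  classical
  obtain ⟨C, rfl⟩ := CStarAlgebra.nonneg_iff_eq_star_mul_self.mp hP.nonneg
  rw [star_eq_conjTranspose] at h ⊢
  have hCB : C * B = 0 := by
    rw [← conjTranspose_mul_self_eq_zero, conjTranspose_mul, ← h]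
    simp only [Matrix.mul_assoc]
  rw [← Matrix.mul_assoc, ← conjTranspose_mul, hCB, conjTranspose_zero, Matrix.zero_mul]

theorem trace_add_one_mul_sub_one_mul_mul_sub_one [CommRing R] [DecidableEq n]
    {N P : Matrix n n R} (h : N * P * N = P) :
    ((N + 1) * ((N - 1) * P * (N - 1))).trace = 0 := by
  have hN2P : (N * N * P).trace = P.trace := by
    rw [Matrix.mul_assoc, trace_mul_comm, h]
  have hN2PN : (N * N * P * N).trace = (N * P).trace := by
    rw [Matrix.mul_assoc N N P, Matrix.mul_assoc, h]
  have expand : (N + 1) * ((N - 1) * P * (N - 1)) = N * N * P * N - N * N * P - P * N + P := by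
    noncomm_ring
  rw [expand, trace_add, trace_sub, trace_sub, hN2P, hN2PN, trace_mul_comm P N]
  ring

theorem PosSemidef.mul_eq_self_of_mul_mul_eq [RCLike 𝕜] [DecidableEq n] {N P : Matrix n n 𝕜}
    (hN : N.PosSemidef) (hP : P.PosSemidef) (h : N * P * N = P) : N * P = P := by
  have hA : (N - 1)ᴴ = N - 1 := by rw [conjTranspose_sub, hN.isHermitian.eq, conjTranspose_one]
  have hS : ((N - 1) * P * (N - 1)).PosSemidef := by
    have := hP.conjTranspose_mul_mul_same (N - 1)
    rwa [hA] at this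
  have htr : (N * ((N - 1) * P * (N - 1))).trace + ((N - 1) * P * (N - 1)).trace = 0 := by
    rw [← trace_add, ← add_one_mul, trace_add_one_mul_sub_one_mul_mul_sub_one h]
  have hS0 : (N - 1) * P * (N - 1) = 0 := by
    rw [← hS.trace_eq_zero_iff]
    exact ((add_eq_zero_iff_of_nonneg (hN.trace_mul_nonneg hS) hS.trace_nonneg).mp htr).2
  have hAP : (N - 1) * P = 0 := by
    simpa only [hA] using hP.conjTranspose_mul_eq_zero (B := N - 1) (by rwa [hA])
  rwa [sub_mul, Matrix.one_mul, sub_eq_zero] at hAP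

end Matrix

/-- If `N` is symmetric positive definite, `P` symmetric positive
semi-definite, and `N P N = P`, then `N` acts as the identity on the column
space of `P`: `N (P w) = P w` for every `w`. -/
theorem fisher_hmc_identity_on_range
    (d : ℕ) (N P : Matrix (Fin d) (Fin d) ℝ)
    (hN : N.PosDef) (hP : P.PosSemidef) (h : N * P * N = P) :
    ∀ w : Fin d → ℝ, N.mulVec (P.mulVec w) = P.mulVec w := by
  intro w
  rw [mulVec_mulVec, PosSemidef.mul_eq_self_of_mul_mul_eq hN.posSemidef hP h]
end

section
/- Let Σ ∈ ℝ^{d×d} be symmetric positive definite, let C ∈ ℝ^{d×k} have column space equal to all of ℝᵈ (full row rank), and set S = -Σ⁻¹C. If A ∈ ℝ^{d×d} is invertible and satisfies AAᵀ SSᵀ AAᵀ = CCᵀ with AAᵀ symmetric positive definite, then AAᵀ = Σ. In particular, when the centered draws from N(μ, Σ) span ℝᵈ (which requires at least d + 1 draws), the Fisher-divergence-optimal affine preconditioner recovers the target covariance exactly. -/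
/-!
The covariance `Sgm` itself solves the Riccati equation `M (S Sᵀ) M = C Cᵀ`, and `S Sᵀ` is
positive definite because `C` has full row rank. A positive definite `B` admits at most one
positive semidefinite solution `M` of `M B M = G`: with `R = √B` we get `(R M R)² = R G R`, so
`R M R` is the unique positive semidefinite square root of `R G R`, and `R` is invertible.
-/

open Matrix
open scoped MatrixOrder ComplexOrder

theorem Matrix.vecMul_injective_of_surjective_mulVec {R m n : Type*} [CommSemiring R]
    [Fintype m] [Fintype n] [DecidableEq m] {C : Matrix m n R}
    (hC : Function.Surjective C.mulVec) : Function.Injective C.vecMul := by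
  intro x y hxy
  ext i
  obtain ⟨w, hw⟩ := hC (Pi.single i 1)
  have hdot : x ⬝ᵥ C *ᵥ w = y ⬝ᵥ C *ᵥ w := by simp only [dotProduct_mulVec, hxy]
  simpa [hw] using hdot

theorem Matrix.PosSemidef.eq_of_mul_mul_eq_mul_mul {𝕜 n : Type*} [RCLike 𝕜] [Fintype n]
    [DecidableEq n] {B M N : Matrix n n 𝕜} (hB : B.PosDef) (hM : M.PosSemidef)
    (hN : N.PosSemidef) (h : M * B * M = N * B * N) : M = N := by
  set R := CFC.sqrt B
  have hR : Rᴴ = R := (CFC.sqrt_nonneg B).posSemidef.isHermitian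
  have hRR : R * R = B := CFC.sqrt_mul_sqrt_self B hB.posSemidef.nonneg
  have conj_nonneg {X : Matrix n n 𝕜} (hX : X.PosSemidef) : 0 ≤ R * X * R := by
    simpa [hR] using (hX.conjTranspose_mul_mul_same R).nonneg
  have conj_sq (X : Matrix n n 𝕜) : (R * X * R) ^ 2 = R * (X * B * X) * R := by
    simp only [sq, ← hRR, Matrix.mul_assoc]
  have hRMR : R * M * R = R * N * R :=
    calc R * M * R = CFC.sqrt ((R * M * R) ^ 2) := (CFC.sqrt_sq _ (conj_nonneg hM)).symm
      _ = CFC.sqrt ((R * N * R) ^ 2) := by rw [conj_sq, conj_sq, h]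
      _ = R * N * R := CFC.sqrt_sq _ (conj_nonneg hN)
  have hBMB : B * M * B = B * N * B := by
    simpa only [← hRR, Matrix.mul_assoc] using congrArg (R * · * R) hRMR
  have hBdet : IsUnit B.det := (isUnit_iff_isUnit_det B).mp hB.isUnit
  simpa [Matrix.mul_assoc, nonsing_inv_mul_cancel_left _ _ hBdet, mul_nonsing_inv _ hBdet]
    using congrArg (B⁻¹ * · * B⁻¹) hBMB

theorem fisher_hmc_full_rank_exact_recovery_general
    (d k : ℕ) (Sgm : Matrix (Fin d) (Fin d) ℝ) (hSgm : Sgm.PosDef)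
    (C : Matrix (Fin d) (Fin k) ℝ)
    (hC : ∀ v : Fin d → ℝ, ∃ w : Fin k → ℝ, C.mulVec w = v)
    (S : Matrix (Fin d) (Fin k) ℝ) (hS : S = -(Sgm⁻¹ * C))
    (A : Matrix (Fin d) (Fin d) ℝ)
    (hAAT : (A * Aᵀ).PosDef)
    (h : (A * Aᵀ) * (S * Sᵀ) * (A * Aᵀ) = C * Cᵀ) :
    A * Aᵀ = Sgm := by
  have hCCt : (C * Cᵀ).PosDef := by
    simpa using PosDef.mul_conjTranspose_self C (vecMul_injective_of_surjective_mulVec hC)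
  have hSSt : S * Sᵀ = Sgm⁻¹ * (C * Cᵀ) * star Sgm⁻¹ := by
    simp [hS, Matrix.mul_assoc, star_eq_conjTranspose]
  have hSStPosDef : (S * Sᵀ).PosDef := by
    rwa [hSSt, IsUnit.posDef_star_right_conjugate_iff hSgm.inv.isUnit]
  have hSgmDet : IsUnit Sgm.det := (isUnit_iff_isUnit_det Sgm).mp hSgm.isUnit
  have hSgmRiccati : Sgm * (S * Sᵀ) * Sgm = C * Cᵀ := by
    rw [hSSt, star_eq_conjTranspose, hSgm.inv.isHermitian.eq]
    simp [Matrix.mul_assoc, mul_nonsing_inv_cancel_left _ _ hSgmDet, nonsing_inv_mul _ hSgmDet]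
  exact hAAT.posSemidef.eq_of_mul_mul_eq_mul_mul hSStPosDef hSgm.posSemidef
    (h.trans hSgmRiccati.symm)

/-- Let `Sgm` be SPD, `C : d×k` with column space all of `ℝᵈ`, and
`S = -Sgm⁻¹C`. If `A` is invertible, `AAᵀ` is SPD, and `AAᵀ SSᵀ AAᵀ = CCᵀ`, then
`AAᵀ = Sgm`: the Fisher-divergence-optimal affine preconditioner recovers the
target covariance exactly. -/
theorem fisher_hmc_full_rank_exact_recovery
    (d k : ℕ) (Sgm : Matrix (Fin d) (Fin d) ℝ) (hSgm : Sgm.PosDef)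
    (C : Matrix (Fin d) (Fin k) ℝ)
    (hC : ∀ v : Fin d → ℝ, ∃ w : Fin k → ℝ, C.mulVec w = v)
    (S : Matrix (Fin d) (Fin k) ℝ) (hS : S = -(Sgm⁻¹ * C))
    (A : Matrix (Fin d) (Fin d) ℝ) (hA : IsUnit A.det)
    (hAAT : (A * Aᵀ).PosDef)
    (h : (A * Aᵀ) * (S * Sᵀ) * (A * Aᵀ) = C * Cᵀ) :
    A * Aᵀ = Sgm :=
  fisher_hmc_full_rank_exact_recovery_general d k Sgm hSgm C hC S hS A hAAT h
end

section
/- Let γ > 0, let C, S ∈ ℝ^{d×k} be matrices (of centered draws and centered scores), and suppose M ∈ ℝ^{d×d} is symmetric positive definite and satisfies the regularized optimality condition M (γI + C Cᵀ) M = γI + S Sᵀ. Then M acts as the identity on the orthogonal complement of the joint column space of C and S: for every v ∈ ℝᵈ with Cᵀv = 0 and Sᵀv = 0, M v = v. Moreover M maps the joint column space of C and S into itself, and on that subspace M satisfies the projected equation M₂ₖ (γI + C₂ₖC₂ₖᵀ) M₂ₖ = γI + S₂ₖS₂ₖᵀ, where C₂ₖ, S₂ₖ, M₂ₖ are the compressions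 of C, S, M to an orthonormal basis of that subspace. -/
/-! Let `A = γI + CCᵀ` and `B = γI + SSᵀ`. Both dominate `γI` as quadratic forms, and on a vector
`v` orthogonal to the columns of `C` and `S` both act as multiplication by `γ`. With `u = Mv` and
`Mz = v`, the equation `MAM = B` gives `γ‖u‖² ≤ uᵀAu = vᵀBv = γ‖v‖²` and
`γ‖z‖² ≤ zᵀBz = vᵀAv = γ‖v‖²`, while `u ⬝ z = ‖v‖²`; hence `u = z`, so `M²v = v` and, `M` being
positive definite, `Mv = v`.

A symmetric matrix fixing the orthogonal complement of a subspace pointwise maps the subspace into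
itself. So `MQ = QY` for some `Y`, whence `Q(QᵀMQ) = MQ` and `(QᵀMQ)Qᵀ = QᵀM`, and the compressed
equation is just `Qᵀ(MAM)Q = QᵀBQ`. -/

open Matrix

variable {m n r : Type*}

lemma dotProduct_self_nonneg [Fintype n] {R : Type*} [Ring R] [LinearOrder R]
    [IsStrictOrderedRing R] (v : n → R) : 0 ≤ v ⬝ᵥ v :=
  Finset.sum_nonneg fun _ _ => mul_self_nonneg _

lemma eq_of_dotProduct_self_le_of_dotProduct_eq [Fintype n] {R : Type*} [CommRing R]
    [LinearOrder R] [IsStrictOrderedRing R] {u z : n → R} {c : R}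
    (hu : u ⬝ᵥ u ≤ c) (hz : z ⬝ᵥ z ≤ c) (huz : u ⬝ᵥ z = c) : u = z := by
  have hsq : (u - z) ⬝ᵥ (u - z) = u ⬝ᵥ u + z ⬝ᵥ z - 2 * (u ⬝ᵥ z) := by
    simp only [sub_dotProduct, dotProduct_sub, dotProduct_comm z u]
    ring
  rw [← sub_eq_zero, ← dotProduct_self_eq_zero]
  exact le_antisymm (by linarith) (dotProduct_self_nonneg _)

lemma Matrix.IsSymm.dotProduct_mulVec_comm [Fintype n] {R : Type*} [CommSemiring R]
    {M : Matrix n n R} (hM : M.IsSymm) (x y : n → R) : x ⬝ᵥ (M *ᵥ y) = (M *ᵥ x) ⬝ᵥ y := by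
  rw [dotProduct_mulVec, ← mulVec_transpose, hM.eq]

lemma Matrix.PosDef.mulVec_eq_self_of_mulVec_mulVec_eq_self [Fintype n] {M : Matrix n n ℝ}
    (hM : M.PosDef) {v : n → ℝ} (hv : M *ᵥ (M *ᵥ v) = v) : M *ᵥ v = v := by
  set w := M *ᵥ v - v
  have hMw : M *ᵥ w = -w := by simp [w, mulVec_sub, hv]
  by_contra hne
  have hpos := hM.dotProduct_mulVec_pos (x := w) (sub_ne_zero.mpr hne)
  simp only [hMw, star_trivial, dotProduct_neg] at hpos
  linarith [dotProduct_self_nonneg w]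

theorem Matrix.PosDef.mulVec_eq_self_of_mul_mul_eq [Fintype n] {M A B : Matrix n n ℝ} {γ : ℝ}
    (hγ : 0 < γ) (hM : M.PosDef) (hA : ∀ x, γ * (x ⬝ᵥ x) ≤ x ⬝ᵥ (A *ᵥ x))
    (hB : ∀ x, γ * (x ⬝ᵥ x) ≤ x ⬝ᵥ (B *ᵥ x)) (h : M * A * M = B) {v : n → ℝ}
    (hAv : A *ᵥ v = γ • v) (hBv : B *ᵥ v = γ • v) : M *ᵥ v = v := by
  classical
  have hMs : M.IsSymm := isHermitian_iff_isSymm.mp hM.isHermitian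
  obtain ⟨z, hz⟩ : ∃ z, M *ᵥ z = v := mulVec_surjective_iff_isUnit.mpr hM.isUnit v
  have hu : γ * ((M *ᵥ v) ⬝ᵥ (M *ᵥ v)) ≤ γ * (v ⬝ᵥ v) := calc
    _ ≤ (M *ᵥ v) ⬝ᵥ (A *ᵥ (M *ᵥ v)) := hA _
    _ = v ⬝ᵥ (B *ᵥ v) := by
      rw [← h, ← mulVec_mulVec, ← mulVec_mulVec, hMs.dotProduct_mulVec_comm]
    _ = γ * (v ⬝ᵥ v) := by rw [hBv, dotProduct_smul, smul_eq_mul]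
  have hz' : γ * (z ⬝ᵥ z) ≤ γ * (v ⬝ᵥ v) := calc
    _ ≤ z ⬝ᵥ (B *ᵥ z) := hB _
    _ = v ⬝ᵥ (A *ᵥ v) := by
      rw [← h, ← mulVec_mulVec, ← mulVec_mulVec, hz, hMs.dotProduct_mulVec_comm, hz]
    _ = γ * (v ⬝ᵥ v) := by rw [hAv, dotProduct_smul, smul_eq_mul]
  have huz : (M *ᵥ v) ⬝ᵥ z = v ⬝ᵥ v := by rw [← hMs.dotProduct_mulVec_comm, hz]
  have hMvz : M *ᵥ v = z := eq_of_dotProduct_self_le_of_dotProduct_eq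
    (le_of_mul_le_mul_left hu hγ) (le_of_mul_le_mul_left hz' hγ) huz
  exact hM.mulVec_eq_self_of_mulVec_mulVec_eq_self (by rw [hMvz, hz])

lemma exists_mulVec_eq_of_forall_dotProduct_eq_zero [Fintype m] [Fintype n] {G : Matrix n m ℝ}
    {x : n → ℝ} (hx : ∀ v, Gᵀ *ᵥ v = 0 → x ⬝ᵥ v = 0) : ∃ w, G *ᵥ w = x := by
  classical
  have hmem : WithLp.toLp 2 x ∈ (toEuclideanLin Gᵀ).kerᗮ := by
    rw [Submodule.mem_orthogonal']
    intro v hv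
    rw [EuclideanSpace.inner_eq_star_dotProduct]
    simpa [dotProduct_comm] using hx v.ofLp (congrArg WithLp.ofLp hv)
  rw [LinearMap.orthogonal_ker, ← toEuclideanLin_conjTranspose_eq_adjoint] at hmem
  obtain ⟨w, hw⟩ := hmem
  exact ⟨w.ofLp, congrArg WithLp.ofLp hw⟩

lemma Matrix.IsSymm.exists_mulVec_eq_mulVec_mulVec [Fintype m] [Fintype n] {M : Matrix n n ℝ}
    (hM : M.IsSymm) {G : Matrix n m ℝ} (hfix : ∀ v, Gᵀ *ᵥ v = 0 → M *ᵥ v = v) (w : m → ℝ) :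
    ∃ u, G *ᵥ u = M *ᵥ (G *ᵥ w) := by
  obtain ⟨w', hw'⟩ := exists_mulVec_eq_of_forall_dotProduct_eq_zero
    (x := M *ᵥ (G *ᵥ w) - G *ᵥ w) fun v hv => by
      rw [sub_dotProduct, ← hM.dotProduct_mulVec_comm, hfix v hv, sub_self]
  exact ⟨w + w', by rw [mulVec_add, hw', add_sub_cancel]⟩

lemma transpose_fromCols_mulVec_eq_zero_iff [Fintype n] {R : Type*} [Semiring R]
    {C S : Matrix n m R} {v : n → R} :
    (fromCols C S)ᵀ *ᵥ v = 0 ↔ Cᵀ *ᵥ v = 0 ∧ Sᵀ *ᵥ v = 0 := by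
  rw [transpose_fromCols, fromRows_mulVec, ← Sum.elim_zero_zero, Sum.elim_eq_iff]

lemma exists_eq_mul_of_forall_mulVec_single [Fintype m] [Fintype r] [DecidableEq m]
    {R : Type*} [Semiring R] {Q : Matrix n r R} {X : Matrix n m R}
    (h : ∀ j, ∃ u, Q *ᵥ u = X *ᵥ Pi.single j 1) : ∃ Y : Matrix r m R, X = Q * Y := by
  choose u hu using h
  refine ⟨Matrix.of fun i j => u j i, ext_of_mulVec_single fun j => ?_⟩
  rw [← hu, ← mulVec_mulVec, mulVec_single_one]
  rfl

lemma Matrix.IsSymm.compression_mul_mul_compression [Fintype n] [Fintype r] [DecidableEq r]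
    {R : Type*} [CommSemiring R] {M : Matrix n n R} (hM : M.IsSymm) (A : Matrix n n R)
    {Q : Matrix n r R} {Y : Matrix r r R} (hQ : Qᵀ * Q = 1) (hMQ : M * Q = Q * Y) :
    (Qᵀ * M * Q) * (Qᵀ * A * Q) * (Qᵀ * M * Q) = Qᵀ * (M * A * M) * Q := by
  have hright : Q * (Qᵀ * M * Q) = M * Q := by
    rw [Matrix.mul_assoc, hMQ, ← Matrix.mul_assoc Qᵀ, hQ, Matrix.one_mul]
  have hleft : (Qᵀ * M * Q) * Qᵀ = Qᵀ * M := by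
    simpa [transpose_mul, hM.eq, Matrix.mul_assoc] using congrArg Matrix.transpose hright
  calc _ = ((Qᵀ * M * Q) * Qᵀ) * A * (Q * (Qᵀ * M * Q)) := by simp only [Matrix.mul_assoc]
    _ = _ := by rw [hleft, hright]; simp only [Matrix.mul_assoc]

section RegularizedGram

variable [Fintype m] [DecidableEq n] {R : Type*} [CommRing R]

def regularizedGram (γ : R) (C : Matrix n m R) : Matrix n n R := γ • 1 + C * Cᵀ

lemma dotProduct_regularizedGram_mulVec [Fintype n] (γ : R) (C : Matrix n m R) (x : n → R) :
    x ⬝ᵥ (regularizedGram γ C *ᵥ x) = γ * (x ⬝ᵥ x) + (Cᵀ *ᵥ x) ⬝ᵥ (Cᵀ *ᵥ x) := by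
  rw [regularizedGram, add_mulVec, dotProduct_add, smul_mulVec, one_mulVec, dotProduct_smul,
    smul_eq_mul, ← mulVec_mulVec, dotProduct_mulVec, ← mulVec_transpose]

lemma le_dotProduct_regularizedGram_mulVec [Fintype n] {γ : ℝ} (C : Matrix n m ℝ) (x : n → ℝ) :
    γ * (x ⬝ᵥ x) ≤ x ⬝ᵥ (regularizedGram γ C *ᵥ x) := by
  rw [dotProduct_regularizedGram_mulVec]
  exact le_add_of_nonneg_right (dotProduct_self_nonneg _)

lemma regularizedGram_mulVec_of_transpose_mulVec_eq_zero [Fintype n] (γ : R)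
    {C : Matrix n m R} {v : n → R} (hv : Cᵀ *ᵥ v = 0) : regularizedGram γ C *ᵥ v = γ • v := by
  rw [regularizedGram, add_mulVec, smul_mulVec, one_mulVec, ← mulVec_mulVec, hv, mulVec_zero,
    add_zero]

lemma transpose_mul_regularizedGram_mul [Fintype n] [DecidableEq r] (γ : R) (C : Matrix n m R)
    {Q : Matrix n r R} (hQ : Qᵀ * Q = 1) :
    Qᵀ * regularizedGram γ C * Q = regularizedGram γ (Qᵀ * C) := by
  rw [regularizedGram, regularizedGram, Matrix.mul_add, Matrix.add_mul, Matrix.mul_smul,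
    Matrix.smul_mul, Matrix.mul_one, hQ, transpose_mul, transpose_transpose]
  simp only [Matrix.mul_assoc]

end RegularizedGram

/-- Let `γ > 0` and suppose the SPD matrix `M` satisfies the
regularized optimality condition `M(γI + CCᵀ)M = γI + SSᵀ`. Then (a) `M` acts as
the identity on the orthogonal complement of the joint column space of `C` and
`S`; (b) `M` maps the joint column space of `C` and `S` into itself; and (c) for
any matrix `Q` with orthonormal columns spanning that joint column space, the
compressions `M₂ₖ = QᵀMQ`, `C₂ₖ = QᵀC`, `S₂ₖ = QᵀS` satisfy the projected
equation `M₂ₖ(γI + C₂ₖC₂ₖᵀ)M₂ₖ = γI + S₂ₖS₂ₖᵀ`. -/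
theorem fisher_hmc_lowrank_projection
    (d k : ℕ) (γ : ℝ) (hγ : 0 < γ)
    (C S : Matrix (Fin d) (Fin k) ℝ)
    (M : Matrix (Fin d) (Fin d) ℝ) (hM : M.PosDef)
    (h : M * (γ • (1 : Matrix (Fin d) (Fin d) ℝ) + C * Cᵀ) * M
        = γ • (1 : Matrix (Fin d) (Fin d) ℝ) + S * Sᵀ) :
    (∀ v : Fin d → ℝ, Cᵀ.mulVec v = 0 → Sᵀ.mulVec v = 0 → M.mulVec v = v) ∧
    (∀ w₁ w₂ : Fin k → ℝ, ∃ u₁ u₂ : Fin k → ℝ,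
      M.mulVec (C.mulVec w₁ + S.mulVec w₂) = C.mulVec u₁ + S.mulVec u₂) ∧
    (∀ (r : ℕ) (Q : Matrix (Fin d) (Fin r) ℝ),
      Qᵀ * Q = 1 →
      (∀ v : Fin d → ℝ, (∃ u : Fin r → ℝ, Q.mulVec u = v) ↔
        ∃ w₁ w₂ : Fin k → ℝ, v = C.mulVec w₁ + S.mulVec w₂) →
      (Qᵀ * M * Q) * (γ • (1 : Matrix (Fin r) (Fin r) ℝ) + (Qᵀ * C) * (Qᵀ * C)ᵀ)
          * (Qᵀ * M * Q)
        = γ • (1 : Matrix (Fin r) (Fin r) ℝ) + (Qᵀ * S) * (Qᵀ * S)ᵀ) := by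
  have hMs : M.IsSymm := isHermitian_iff_isSymm.mp hM.isHermitian
  have hopt : M * regularizedGram γ C * M = regularizedGram γ S := h
  have hfix : ∀ v, Cᵀ *ᵥ v = 0 → Sᵀ *ᵥ v = 0 → M *ᵥ v = v := fun v hCv hSv =>
    hM.mulVec_eq_self_of_mul_mul_eq hγ (le_dotProduct_regularizedGram_mulVec C)
      (le_dotProduct_regularizedGram_mulVec S) hopt
      (regularizedGram_mulVec_of_transpose_mulVec_eq_zero γ hCv)
      (regularizedGram_mulVec_of_transpose_mulVec_eq_zero γ hSv)
  have hinv : ∀ w₁ w₂, ∃ u₁ u₂, M *ᵥ (C *ᵥ w₁ + S *ᵥ w₂) = C *ᵥ u₁ + S *ᵥ u₂ := by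
    intro w₁ w₂
    obtain ⟨u, hu⟩ := hMs.exists_mulVec_eq_mulVec_mulVec (G := fromCols C S)
      (fun v hv => (transpose_fromCols_mulVec_eq_zero_iff.mp hv).elim (hfix v)) (Sum.elim w₁ w₂)
    rw [fromCols_mulVec_sumElim] at hu
    exact ⟨u ∘ Sum.inl, u ∘ Sum.inr, by rw [← hu, fromCols_mulVec]⟩
  refine ⟨hfix, hinv, fun r Q hQ hspan => ?_⟩
  obtain ⟨Y, hY⟩ := exists_eq_mul_of_forall_mulVec_single (Q := Q) (X := M * Q) fun j => by
    obtain ⟨w₁, w₂, hw⟩ := (hspan _).mp ⟨Pi.single j 1, rfl⟩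
    obtain ⟨u₁, u₂, hu⟩ := hinv w₁ w₂
    rw [← mulVec_mulVec, hw, hu]
    exact (hspan _).mpr ⟨u₁, u₂, rfl⟩
  calc _ = (Qᵀ * M * Q) * (Qᵀ * regularizedGram γ C * Q) * (Qᵀ * M * Q) := by
        rw [transpose_mul_regularizedGram_mul γ C hQ]; rfl
    _ = Qᵀ * regularizedGram γ S * Q := by
        rw [hMs.compression_mul_mul_compression _ hQ hY, hopt]
    _ = _ := transpose_mul_regularizedGram_mul γ S hQ
end
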